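/- Let K be the Laplacian kernel on ℝ^d given by K(x, y) = exp(−‖x − y‖₁), with kernel distance dist_φ(x,y) = √(2 − 2 exp(−‖x−y‖₁)). There exist constants C₁, C₂ > 0 such that for every 0 < δ ≤ ε ≤ 2^{-16}, every integers d, N ≥ 1, and every D ≥ max{C₁ ε^{-1} log³(1/δ), C₂ ε^{-2} log(1/δ)}, there exists a random mapping π : ℝ^d → ℝ^D (on some probability space) such that for every x, y ∈ ℕ^d with all coordinates at most N: Pr[ |dist_π(x,y) − dist_φ(x,y)| ≤ ε · dist_φ(x,y) ] ≥ 1 − δ, where dist_π(x,y) = ‖π(x) − π(y)‖₂. -/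

import Mathlib

open MeasureTheory

noncomputable section

/-- The ℓ₁ norm on `ℝ^d`. -/
def l1 {d : ℕ} (x : EuclideanSpace ℝ (Fin d)) : ℝ := ∑ i, |x i|

/-- The kernel distance of the Laplacian kernel `K(x,y) = exp(-‖x-y‖₁)`:
`dist_φ(x,y) = √(2 - 2 exp(-‖x-y‖₁))`. -/
def distLap {d : ℕ} (x y : EuclideanSpace ℝ (Fin d)) : ℝ :=
  Real.sqrt (2 - 2 * Real.exp (-(l1 (x - y))))

/-!
Random binning. On every axis each unit gap `[k, k + 1]`, `k < N`, is cut independently with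
probability `1 - e⁻¹`, and every cell of the resulting grid gets an independent uniform sign
`±1`. Two integer points share a cell iff none of the `‖x - y‖₁` gaps between them is cut, so
the product of their signs has mean `e^{-‖x - y‖₁} = K(x, y)`. With `D` independent copies,
`π(x) = D^{-1/2} (sign_j(x))_j` satisfies `‖π x - π y‖² = 2 - 2T`, where `T` is the empirical
mean of the `D` sign products, and Hoeffding's inequality gives `|T - K| ≤ ε / 2` outside
probability `2 exp(-D ε² / 8)`. Since `K ≤ e⁻¹ ≤ 1 / 2` for distinct integer points, this is a
relative error `ε` in `√(2 - 2T)`, and `D ≥ 16 ε⁻² log (1 / δ)` makes the failure probability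
at most `δ`.
-/

section Concentration

open ProbabilityTheory Real

variable {α X : Type*}

theorem Real.abs_sqrt_sub_sqrt_le {a b ε : ℝ} (ha : 0 ≤ a) (hb : 0 < b) (h : |a - b| ≤ ε * b) :
    |√a - √b| ≤ ε * √b := by
  have hsb : 0 < √b := sqrt_pos.mpr hb
  refine le_of_mul_le_mul_right ?_ hsb
  calc |√a - √b| * √b ≤ |√a - √b| * (√a + √b) := by
        gcongr; exact le_add_of_nonneg_left (sqrt_nonneg a)
    _ = |a - b| := by
      rw [← abs_of_nonneg (add_nonneg (sqrt_nonneg a) hsb.le), ← abs_mul]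
      congr 1
      linear_combination sq_sqrt ha - sq_sqrt hb.le
    _ ≤ ε * √b * √b := by rwa [mul_assoc, mul_self_sqrt hb.le]

theorem abs_sqrt_two_sub_two_mul_sub_le {T k ε : ℝ} (hT : T ≤ 1) (hk : k ≤ 1 / 2)
    (h : |T - k| ≤ ε / 2) : |√(2 - 2 * T) - √(2 - 2 * k)| ≤ ε * √(2 - 2 * k) := by
  refine abs_sqrt_sub_sqrt_le (by linarith) (by linarith) ?_
  rw [show 2 - 2 * T - (2 - 2 * k) = -2 * (T - k) by ring, abs_mul, abs_neg, abs_two]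
  nlinarith [abs_nonneg (T - k)]

theorem measureReal_pi_abs_sum_sub_ge_le [MeasurableSpace α] (ν : Measure α)
    [IsProbabilityMeasure ν] {g : α → ℝ} (hg : Measurable g) (hg_le : ∀ a, |g a| ≤ 1) (D : ℕ)
    {t : ℝ} (ht : 0 ≤ t) :
    (Measure.pi fun _ : Fin D => ν).real {ω | t ≤ |∑ j, g (ω j) - D * ∫ a, g a ∂ν|} ≤
      2 * exp (-t ^ 2 / (2 * D)) := by
  set μ := Measure.pi fun _ : Fin D => ν
  set m := ∫ a, g a ∂ν
  have h_subG : ∀ j, HasSubgaussianMGF (fun ω : Fin D → α => g (ω j) - m) 1 μ := by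
    intro j
    have h := hasSubgaussianMGF_of_mem_Icc (μ := μ) (X := fun ω => g (ω j)) (a := -1) (b := 1)
      (hg.comp (measurable_pi_apply j)).aemeasurable
      (ae_of_all _ fun ω => abs_le.mp (hg_le (ω j)))
    have hmean : μ[fun ω => g (ω j)] = m := by
      rw [← integral_map (measurable_pi_apply j).aemeasurable hg.aestronglyMeasurable,
        (measurePreserving_eval _ j).map_eq]
    norm_num [hmean] at h
    exact h
  have h_tail : ∀ {X : α → ℝ}, Measurable X → (∀ j, HasSubgaussianMGF (fun ω => X (ω j)) 1 μ) →
      μ.real {ω | t ≤ ∑ j, X (ω j)} ≤ exp (-t ^ 2 / (2 * D)) := fun hX hX_subG => by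
    simpa using HasSubgaussianMGF.measure_sum_ge_le_of_iIndepFun (s := Finset.univ)
      (iIndepFun_pi fun _ => hX.aemeasurable) (fun j _ => hX_subG j) ht
  have h_upper := h_tail (hg.sub_const m) h_subG
  have h_lower := h_tail (X := fun a => -(g a - m)) (hg.sub_const m).neg fun j => (h_subG j).neg
  calc μ.real {ω | t ≤ |∑ j, g (ω j) - D * m|}
      ≤ μ.real ({ω | t ≤ ∑ j, (g (ω j) - m)} ∪ {ω | t ≤ ∑ j, -(g (ω j) - m)}) :=
        measureReal_mono fun ω hω => by simpa [Finset.sum_sub_distrib, le_abs] using hω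
    _ ≤ 2 * exp (-t ^ 2 / (2 * D)) := by
        linarith [measureReal_union_le (μ := μ) {ω | t ≤ ∑ j, (g (ω j) - m)}
          {ω | t ≤ ∑ j, -(g (ω j) - m)}]

def featureEmbedding (f : X → α → ℝ) (D : ℕ) (ω : Fin D → α) (x : X) :
    EuclideanSpace ℝ (Fin D) :=
  WithLp.toLp 2 fun j => f x (ω j) / √D

theorem norm_featureEmbedding_sub {f : X → α → ℝ} (hf : ∀ x a, f x a ^ 2 = 1) {D : ℕ}
    (hD : D ≠ 0) (ω : Fin D → α) (x y : X) :
    ‖featureEmbedding f D ω x - featureEmbedding f D ω y‖ =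
      √(2 - 2 * ((∑ j, f x (ω j) * f y (ω j)) / D)) := by
  have hD' : (0 : ℝ) < D := by positivity
  rw [EuclideanSpace.norm_eq]
  congr 1
  have hterm : ∀ j, ‖(featureEmbedding f D ω x - featureEmbedding f D ω y) j‖ ^ 2 =
      (2 - 2 * (f x (ω j) * f y (ω j))) / D := by
    intro j
    simp only [featureEmbedding, PiLp.sub_apply, Real.norm_eq_abs, sq_abs, div_sub_div_same,
      div_pow, sq_sqrt hD'.le]
    rw [sub_sq, hf, hf]
    ring
  simp_rw [hterm, ← Finset.sum_div, Finset.sum_sub_distrib, ← Finset.mul_sum, Finset.sum_const,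
    Finset.card_univ, Fintype.card_fin, nsmul_eq_mul]
  field_simp

theorem featureEmbedding_concentration [MeasurableSpace α] (ν : Measure α)
    [IsProbabilityMeasure ν] {f : X → α → ℝ} (hf_meas : ∀ x, Measurable (f x))
    (hf : ∀ x a, f x a ^ 2 = 1) {D : ℕ} (hD : D ≠ 0) {x y : X}
    (hk : ∫ a, f x a * f y a ∂ν ≤ 1 / 2) {ε : ℝ} (hε : 0 ≤ ε) :
    1 - 2 * exp (-D * ε ^ 2 / 8) ≤
      (Measure.pi fun _ : Fin D => ν).real {ω |
        |‖featureEmbedding f D ω x - featureEmbedding f D ω y‖ - √(2 - 2 * ∫ a, f x a * f y a ∂ν)|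
          ≤ ε * √(2 - 2 * ∫ a, f x a * f y a ∂ν)} := by
  set μ := Measure.pi fun _ : Fin D => ν
  set k := ∫ a, f x a * f y a ∂ν
  have hD' : (0 : ℝ) < D := by positivity
  have hg_le : ∀ a, |f x a * f y a| ≤ 1 := fun a => by
    rw [abs_mul, ← sqrt_sq_eq_abs, ← sqrt_sq_eq_abs, hf, hf, sqrt_one, one_mul]
  set bad := {ω : Fin D → α | D * ε / 2 ≤ |∑ j, f x (ω j) * f y (ω j) - D * k|}
  have h_bad : μ.real bad ≤ 2 * exp (-D * ε ^ 2 / 8) := by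
    have h := measureReal_pi_abs_sum_sub_ge_le ν (g := fun a => f x a * f y a)
      ((hf_meas x).mul (hf_meas y)) hg_le D (by positivity : 0 ≤ D * ε / 2)
    rwa [show -(D * ε / 2) ^ 2 / (2 * D) = -D * ε ^ 2 / 8 by field_simp; ring] at h
  have h_good : badᶜ ⊆ {ω | |‖featureEmbedding f D ω x - featureEmbedding f D ω y‖ -
      √(2 - 2 * k)| ≤ ε * √(2 - 2 * k)} := by
    intro ω hω
    simp only [Set.mem_compl_iff, Set.mem_ofPred_eq, not_le, bad] at hω
    set T := (∑ j, f x (ω j) * f y (ω j)) / D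
    have hT_le : T ≤ 1 := by
      rw [div_le_one hD']
      calc ∑ j, f x (ω j) * f y (ω j) ≤ ∑ _j : Fin D, (1 : ℝ) :=
            Finset.sum_le_sum fun j _ => (le_abs_self _).trans (hg_le _)
        _ = D := by simp
    have hT : |T - k| ≤ ε / 2 := by
      rw [show T - k = (∑ j, f x (ω j) * f y (ω j) - D * k) / D by
        rw [sub_div, mul_div_cancel_left₀ _ hD'.ne'], abs_div, abs_of_pos hD', div_le_iff₀ hD']
      linarith
    rw [Set.mem_ofPred_eq, norm_featureEmbedding_sub hf hD]
    exact abs_sqrt_two_sub_two_mul_sub_le hT_le hk hT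
  calc 1 - 2 * exp (-D * ε ^ 2 / 8) ≤ 1 - μ.real bad := by linarith
    _ ≤ μ.real badᶜ := by
      have := measureReal_union_le (μ := μ) bad badᶜ
      rw [Set.union_compl_self, probReal_univ] at this
      linarith
    _ ≤ _ := measureReal_mono h_good

theorem two_mul_exp_neg_le {δ ε D : ℝ} (hδ : 0 < δ) (hδ_half : δ ≤ 1 / 2) (hε : 0 < ε)
    (hD : 16 * ε⁻¹ ^ 2 * log (1 / δ) ≤ D) : 2 * exp (-D * ε ^ 2 / 8) ≤ δ := by
  have hlog : 2 * log (1 / δ) ≤ D * ε ^ 2 / 8 := by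
    have := mul_le_mul_of_nonneg_right hD (sq_nonneg ε)
    field_simp at this ⊢
    linarith
  calc 2 * exp (-D * ε ^ 2 / 8) ≤ 2 * exp (-(2 * log (1 / δ))) := by gcongr; linarith
    _ = 2 * δ ^ 2 := by
      rw [one_div, log_inv, mul_neg, neg_neg, ← log_rpow hδ, exp_log (by positivity), rpow_two]
    _ ≤ δ := by nlinarith

end Concentration

namespace RandomBinning

open ProbabilityTheory Real Finset unitInterval
open scoped ENNReal

variable {d N : ℕ}

-- `b i k = true` means that the gap between `k` and `k + 1` on axis `i` is cut; under
-- `cutMeasure q` this happens independently with probability `1 - q`.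
abbrev Cuts (d N : ℕ) := Fin d → Fin N → Bool

abbrev Bin (d N : ℕ) := Fin d → Fin (N + 1)

def cutsBelow (c : Fin N → Bool) (t : ℝ) : ℕ := #{k : Fin N | ((k : ℕ) : ℝ) < t ∧ c k}

theorem cutsBelow_lt (c : Fin N → Bool) (t : ℝ) : cutsBelow c t < N + 1 :=
  Nat.lt_succ_of_le <| (card_filter_le _ _).trans (card_fin N).le

def bin (b : Cuts d N) (u : EuclideanSpace ℝ (Fin d)) : Bin d N :=
  fun i => ⟨cutsBelow (b i) (u i), cutsBelow_lt _ _⟩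

def natPoint (x : Fin d → ℕ) : EuclideanSpace ℝ (Fin d) := WithLp.toLp 2 fun i => (x i : ℝ)

theorem cutsBelow_natCast_eq_iff {a c : ℕ} (hac : a ≤ c) (g : Fin N → Bool) :
    cutsBelow g c = cutsBelow g a ↔ ∀ k : Fin N, a ≤ (k : ℕ) → (k : ℕ) < c → g k = false := by
  have hsplit : cutsBelow g c = cutsBelow g a + #{k : Fin N | a ≤ (k : ℕ) ∧ (k : ℕ) < c ∧ g k} := by
    simp only [cutsBelow, Nat.cast_lt]
    rw [← card_union_of_disjoint (disjoint_filter.2 fun k _ h₁ h₂ => by omega), ← filter_or]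
    congr 1
    ext k
    simp only [mem_filter, mem_univ, true_and]
    cases g k
    · simp
    · simp only [and_true]
      omega
  simp [hsplit, filter_eq_empty_iff]

theorem bin_natPoint_eq_iff (b : Cuts d N) (x y : Fin d → ℕ) :
    bin b (natPoint x) = bin b (natPoint y) ↔
      ∀ i, ∀ k : Fin N, min (x i) (y i) ≤ k ∧ k < max (x i) (y i) → b i k = false := by
  simp only [funext_iff, Fin.ext_iff, and_imp]
  refine forall_congr' fun i => ?_
  rcases le_total (x i) (y i) with h | h
  · rw [min_eq_left h, max_eq_right h, eq_comm]
    exact cutsBelow_natCast_eq_iff h (b i)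
  · rw [min_eq_right h, max_eq_left h]
    exact cutsBelow_natCast_eq_iff h (b i)

def cutMeasure (q : I) (d N : ℕ) : Measure (Cuts d N) :=
  Measure.pi fun _ => Measure.pi fun _ => Ber(false, true, q)

instance (q : I) : IsProbabilityMeasure (cutMeasure q d N) := by unfold cutMeasure; infer_instance

theorem cutMeasure_real_bin_eq (q : I) {x y : Fin d → ℕ} (hx : ∀ i, x i ≤ N)
    (hy : ∀ i, y i ≤ N) :
    (cutMeasure q d N).real {b | bin b (natPoint x) = bin b (natPoint y)} =
      (q : ℝ) ^ ∑ i, (max (x i) (y i) - min (x i) (y i)) := by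
  have hbox : {b | bin b (natPoint x) = bin b (natPoint y)} = Set.univ.pi fun i => Set.univ.pi
      fun k : Fin N => {t | min (x i) (y i) ≤ k ∧ k < max (x i) (y i) → t = false} := by
    ext b
    simp [bin_natPoint_eq_iff]
  have hgap : ∀ i, #{k : Fin N | min (x i) (y i) ≤ k ∧ k < max (x i) (y i)} =
      max (x i) (y i) - min (x i) (y i) := fun i => by
    rw [← Nat.card_Ico, ← card_map Fin.valEmbedding]
    congr 1
    ext k
    simp only [mem_map, mem_filter, mem_univ, true_and, Fin.valEmbedding_apply, mem_Ico]
    exact ⟨by rintro ⟨k, hk, rfl⟩; exact hk,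
      fun hk => ⟨⟨k, hk.2.trans_le (max_le (hx i) (hy i))⟩, hk, rfl⟩⟩
  have hcoin : ∀ (P : Prop) [Decidable P],
      Ber(false, true, q) {t | P → t = false} =
        if P then (unitInterval.toNNReal q : ℝ≥0∞) else 1 := by
    intro P _
    split_ifs with hP <;> simp [hP]
  rw [hbox, measureReal_def, cutMeasure, Measure.pi_pi]
  simp_rw [Measure.pi_pi, hcoin, prod_ite, prod_const, one_pow, mul_one, hgap,
    prod_pow_eq_pow_sum]
  simp

def sgn (b : Bool) : ℝ := if b then 1 else -1

theorem sgn_mul_self (b : Bool) : sgn b * sgn b = 1 := by cases b <;> norm_num [sgn]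

def fairCoin : Measure Bool := Ber(true, false, ⟨1 / 2, by norm_num, by norm_num⟩)

instance : IsProbabilityMeasure fairCoin := by unfold fairCoin; infer_instance

theorem integral_sgn_mul_sgn_of_ne {ι : Type*} [Fintype ι] {c₁ c₂ : ι} (h : c₁ ≠ c₂) :
    ∫ s, sgn (s c₁) * sgn (s c₂) ∂(Measure.pi fun _ : ι => fairCoin) = 0 := by
  have hmean : ∀ c, ∫ s, sgn (s c) ∂(Measure.pi fun _ : ι => fairCoin) = 0 := fun c => by
    rw [← integral_map (measurable_pi_apply c).aemeasurable
      (measurable_of_finite sgn).aestronglyMeasurable, (measurePreserving_eval _ c).map_eq,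
      fairCoin, integral_bernoulliMeasure]
    norm_num [sgn]
  have hindep := (iIndepFun_pi (μ := fun _ : ι => fairCoin) (X := fun _ => sgn) fun _ =>
    (measurable_of_finite sgn).aemeasurable).indepFun h
  rw [hindep.integral_fun_mul_eq_mul_integral (measurable_of_finite _).aestronglyMeasurable
    (measurable_of_finite _).aestronglyMeasurable, hmean, zero_mul]

abbrev Sample (d N : ℕ) := Cuts d N × (Bin d N → Bool)

def binningMeasure (q : I) (d N : ℕ) : Measure (Sample d N) :=
  (cutMeasure q d N).prod (Measure.pi fun _ => fairCoin)

instance (q : I) : IsProbabilityMeasure (binningMeasure q d N) := by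
  unfold binningMeasure; infer_instance

def binFeature (u : EuclideanSpace ℝ (Fin d)) (a : Sample d N) : ℝ := sgn (a.2 (bin a.1 u))

theorem integral_binFeature_mul (q : I) (u v : EuclideanSpace ℝ (Fin d)) :
    ∫ a, binFeature u a * binFeature v a ∂binningMeasure q d N =
      (cutMeasure q d N).real {b | bin b u = bin b v} := by
  have hinner : (fun b : Cuts d N => ∫ s, binFeature u (b, s) * binFeature v (b, s)
      ∂(Measure.pi fun _ => fairCoin)) = {b | bin b u = bin b v}.indicator 1 := funext fun b => by
    by_cases h : bin b u = bin b v
    · simp [binFeature, h, sgn_mul_self]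
    · simp [binFeature, h, integral_sgn_mul_sgn_of_ne h]
  rw [binningMeasure, integral_prod _ Integrable.of_finite, hinner,
    integral_indicator_one MeasurableSet.of_discrete]

def laplacianBinning (d N : ℕ) : Measure (Sample d N) :=
  binningMeasure ⟨exp (-1), (exp_pos _).le, exp_le_one_iff.2 (by norm_num)⟩ d N

instance : IsProbabilityMeasure (laplacianBinning d N) := by
  unfold laplacianBinning; infer_instance

theorem l1_natPoint_sub (x y : Fin d → ℕ) :
    l1 (natPoint x - natPoint y) = ((∑ i, (max (x i) (y i) - min (x i) (y i)) : ℕ) : ℝ) := by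
  push_cast [Nat.cast_sub (min_le_max)]
  simp_rw [max_sub_min_eq_abs']
  rfl

theorem one_le_l1_natPoint_sub {x y : Fin d → ℕ} (h : x ≠ y) :
    1 ≤ l1 (natPoint x - natPoint y) := by
  obtain ⟨i, hi⟩ := Function.ne_iff.mp h
  rw [l1_natPoint_sub, Nat.one_le_cast]
  exact (Finset.single_le_sum (fun _ _ => Nat.zero_le _) (mem_univ i)).trans' (by omega)

theorem integral_binFeature_mul_natPoint {x y : Fin d → ℕ} (hx : ∀ i, x i ≤ N)
    (hy : ∀ i, y i ≤ N) :
    ∫ a, binFeature (natPoint x) a * binFeature (natPoint y) a ∂laplacianBinning d N =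
      exp (-l1 (natPoint x - natPoint y)) := by
  rw [laplacianBinning, integral_binFeature_mul, cutMeasure_real_bin_eq _ hx hy, l1_natPoint_sub,
    ← exp_nat_mul]
  simp

theorem laplacianBinning_concentration {D : ℕ} (hD : D ≠ 0) {x y : Fin d → ℕ}
    (hx : ∀ i, x i ≤ N) (hy : ∀ i, y i ≤ N) {ε : ℝ} (hε : 0 ≤ ε) :
    1 - 2 * exp (-D * ε ^ 2 / 8) ≤ (Measure.pi fun _ : Fin D => laplacianBinning d N).real {ω |
      |‖featureEmbedding binFeature D ω (natPoint x) - featureEmbedding binFeature D ω (natPoint y)‖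
        - distLap (natPoint x) (natPoint y)| ≤ ε * distLap (natPoint x) (natPoint y)} := by
  by_cases hxy : x = y
  · subst hxy
    simpa [distLap, l1, probReal_univ] using (by positivity : 0 ≤ 2 * exp (-D * ε ^ 2 / 8))
  have hK : ∫ a, binFeature (natPoint x) a * binFeature (natPoint y) a ∂laplacianBinning d N
      ≤ 1 / 2 := by
    rw [integral_binFeature_mul_natPoint hx hy]
    exact (exp_le_exp.2 (neg_le_neg (one_le_l1_natPoint_sub hxy))).trans exp_neg_one_lt_half.le
  rw [distLap, ← integral_binFeature_mul_natPoint hx hy]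
  exact featureEmbedding_concentration _ (fun _ => measurable_of_countable _)
    (fun _ _ => (sq _).trans (sgn_mul_self _)) hD hK hε

end RandomBinning

/-- oblivious dimension reduction for the Laplacian kernel on integer points.
There are constants `C₁, C₂ > 0` such that for all `0 < δ ≤ ε ≤ 2⁻¹⁶`, all `d, N ≥ 1`, and all
`D ≥ max (C₁ ε⁻¹ log³(1/δ)) (C₂ ε⁻² log(1/δ))`, there is a random mapping
`π : ℝ^d → ℝ^D` preserving the Laplacian kernel distance between any two points of `ℕ^d` with
coordinates at most `N` within relative error `ε`, with probability at least `1 - δ`. -/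
theorem laplacian_oblivious_embedding_integer_points :
    ∃ C₁ > (0:ℝ), ∃ C₂ > (0:ℝ), ∀ (ε δ : ℝ), 0 < δ → δ ≤ ε → ε ≤ 2 ^ (-(16:ℤ)) →
      ∀ (d N : ℕ), 1 ≤ d → 1 ≤ N →
      ∀ (D : ℕ), (D : ℝ) ≥ max (C₁ * ε⁻¹ * (Real.log (1/δ))^3) (C₂ * ε⁻¹^2 * Real.log (1/δ)) →
      ∃ (Ω : Type) (_ : MeasurableSpace Ω) (μ : Measure Ω) (_ : IsProbabilityMeasure μ)
        (π : Ω → EuclideanSpace ℝ (Fin d) → EuclideanSpace ℝ (Fin D)),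
        (∀ x, Measurable (fun a => π a x)) ∧
        ∀ (x y : Fin d → ℕ), (∀ i, x i ≤ N) → (∀ i, y i ≤ N) →
          ENNReal.ofReal (1 - δ) ≤
            μ {a | |‖π a (WithLp.toLp 2 (fun i => (x i : ℝ))) - π a (WithLp.toLp 2 (fun i => (y i : ℝ)))‖
                      - distLap (WithLp.toLp 2 (fun i => (x i : ℝ))) (WithLp.toLp 2 (fun i => (y i : ℝ)))|
                    ≤ ε * distLap (WithLp.toLp 2 (fun i => (x i : ℝ))) (WithLp.toLp 2 (fun i => (y i : ℝ)))} := by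
  refine ⟨1, one_pos, 16, by norm_num, fun ε δ hδ hδε hε d N _ _ D hD => ?_⟩
  have hε_pos : 0 < ε := hδ.trans_le hδε
  have hδ_half : δ ≤ 1 / 2 := hδε.trans (hε.trans (by norm_num))
  have hD₂ : 16 * ε⁻¹ ^ 2 * Real.log (1 / δ) ≤ D := (le_max_right _ _).trans hD
  have hD_ne : D ≠ 0 := by
    have hlog : 0 < Real.log (1 / δ) := Real.log_pos (one_lt_one_div hδ (by linarith))
    exact_mod_cast ((by positivity : 0 < 16 * ε⁻¹ ^ 2 * Real.log (1 / δ)).trans_le hD₂).ne'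
  refine ⟨Fin D → RandomBinning.Sample d N, inferInstance,
    Measure.pi fun _ => RandomBinning.laplacianBinning d N, inferInstance,
    featureEmbedding RandomBinning.binFeature D, fun _ => measurable_of_countable _,
    fun x y hx hy => ENNReal.ofReal_le_of_le_toReal ?_⟩
  exact (sub_le_sub_left (two_mul_exp_neg_le hδ hδ_half hε_pos hD₂) 1).trans
    (RandomBinning.laplacianBinning_concentration hD_ne hx hy hε_pos.le)
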